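/- arXiv:1608.08325 — 5 statements merged into one kernel-verified Lean document; each statement's English description precedes it below -/
import Mathlib

section
/- Let S, S' be two (e+1)-element subsets of {0,...,n} each containing 0, with S ≠ S'. Suppose there exists a sequence 0 < s_1 < s'_1 < ... < s_k < s'_k such that S ∩ [s_i, s'_i] = {s_i} for all 1 ≤ i ≤ k and S' = (S \ {s_1,...,s_k}) ∪ {s'_1,...,s'_k}. Let s = min(S \ S') and s' = min(S' \ S). Then s < s', S ∩ [s, s'] = {s}, and S' ∩ [s, s'] = {s'}. -/
/-- The tightness-criterion relation on subsets of `{0,...,n}` (based components of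
basic dividing sets): `Hom(S,S') ≠ 0` iff there is a sequence
`0 < s_1 < s'_1 < ⋯ < s_k < s'_k` with `S ∩ [s_i, s'_i] = {s_i}` and
`S' = (S \ {s_1,...,s_k}) ∪ {s'_1,...,s'_k}`. -/
def BHom (S S' : Finset ℕ) : Prop :=
  ∃ (k : ℕ) (a b : Fin k → ℕ),
    (∀ i, 0 < a i ∧ a i < b i) ∧
    (∀ i j : Fin k, i < j → b i < a j) ∧
    (∀ i, S.filter (fun x => a i ≤ x ∧ x ≤ b i) = {a i}) ∧
    S' = (S \ Finset.image a Finset.univ) ∪ Finset.image b Finset.univ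

/-- Proposition 4.1, direction (2) ⇒ structure of the minima: if `S' ` is obtained
from `S` by an admissible sequence and `S ≠ S'`, then with `s = min (S \ S')` and
`s' = min (S' \ S)` one has `s < s'`, `S ∩ [s,s'] = {s}` and `S' ∩ [s,s'] = {s'}`. -/
theorem stmt1 (n e : ℕ) (S S' : Finset ℕ)
    (hS : S ⊆ Finset.range (n + 1)) (hS' : S' ⊆ Finset.range (n + 1))
    (h0S : 0 ∈ S) (h0S' : 0 ∈ S')
    (hcard : S.card = e + 1) (hcard' : S'.card = e + 1)
    (hne : S ≠ S')
    (k : ℕ) (a b : Fin k → ℕ)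
    (hab : ∀ i, 0 < a i ∧ a i < b i)
    (hsep : ∀ i j : Fin k, i < j → b i < a j)
    (hint : ∀ i, S.filter (fun x => a i ≤ x ∧ x ≤ b i) = {a i})
    (hS'eq : S' = (S \ Finset.image a Finset.univ) ∪ Finset.image b Finset.univ)
    (hne1 : (S \ S').Nonempty) (hne2 : (S' \ S).Nonempty) :
    (S \ S').min' hne1 < (S' \ S).min' hne2 ∧
    S.filter (fun x => (S \ S').min' hne1 ≤ x ∧ x ≤ (S' \ S).min' hne2)
      = {(S \ S').min' hne1} ∧
    S'.filter (fun x => (S \ S').min' hne1 ≤ x ∧ x ≤ (S' \ S).min' hne2)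
      = {(S' \ S).min' hne2} := by
  have haS : ∀ i, a i ∈ S := by
    intro i
    have h : a i ∈ ({a i} : Finset ℕ) := Finset.mem_singleton_self _
    rw [← hint i] at h
    exact (Finset.mem_filter.mp h).1
  have hbS : ∀ i, b i ∉ S := by
    intro i hb
    have h : b i ∈ S.filter (fun x => a i ≤ x ∧ x ≤ b i) :=
      Finset.mem_filter.mpr ⟨hb, (hab i).2.le, le_refl _⟩
    rw [hint i] at h
    have := Finset.mem_singleton.mp h
    exact absurd this.symm (ne_of_lt (hab i).2)
  have hk : 0 < k := by
    rcases hne2 with ⟨x, hx⟩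
    rw [Finset.mem_sdiff, hS'eq] at hx
    rcases Finset.mem_union.mp hx.1 with h | h
    · exact absurd (Finset.mem_sdiff.mp h).1 hx.2
    · rcases Finset.mem_image.mp h with ⟨i, _, _⟩
      exact i.pos
  have hSd : S \ S' = Finset.image a Finset.univ := by
    ext x
    simp only [Finset.mem_sdiff, hS'eq, Finset.mem_union, Finset.mem_image,
      Finset.mem_univ, true_and]
    constructor
    · rintro ⟨hxS, hx⟩
      push_neg at hx
      exact hx.1 hxS
    · rintro ⟨i, rfl⟩
      refine ⟨haS i, ?_⟩
      push_neg
      refine ⟨fun _ => ⟨i, rfl⟩, fun j hj => hbS j (hj ▸ haS i)⟩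
  have hS'd : S' \ S = Finset.image b Finset.univ := by
    ext x
    simp only [Finset.mem_sdiff, hS'eq, Finset.mem_union, Finset.mem_image,
      Finset.mem_univ, true_and]
    constructor
    · rintro ⟨hx, hxS⟩
      rcases hx with h | h
      · exact absurd h.1 hxS
      · exact h
    · rintro ⟨i, rfl⟩
      exact ⟨Or.inr ⟨i, rfl⟩, hbS i⟩
  have hamono : ∀ i j : Fin k, i < j → a i < a j :=
    fun i j h => lt_trans (hab i).2 (hsep i j h)
  have hbmono : ∀ i j : Fin k, i < j → b i < b j :=
    fun i j h => lt_trans (hsep i j h) (hab j).2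
  set i0 : Fin k := ⟨0, hk⟩ with hi0
  have hle0 : ∀ j : Fin k, i0 ≤ j := fun j => by
    simp [Fin.le_def, hi0]
  have hmin1 : (S \ S').min' hne1 = a i0 := by
    apply le_antisymm
    · apply Finset.min'_le
      rw [hSd]
      exact Finset.mem_image_of_mem a (Finset.mem_univ i0)
    · apply Finset.le_min'
      intro y hy
      rw [hSd] at hy
      rcases Finset.mem_image.mp hy with ⟨j, _, rfl⟩
      rcases eq_or_lt_of_le (hle0 j) with h | h
      · rw [h]
      · exact (hamono i0 j h).le
  have hmin2 : (S' \ S).min' hne2 = b i0 := by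
    apply le_antisymm
    · apply Finset.min'_le
      rw [hS'd]
      exact Finset.mem_image_of_mem b (Finset.mem_univ i0)
    · apply Finset.le_min'
      intro y hy
      rw [hS'd] at hy
      rcases Finset.mem_image.mp hy with ⟨j, _, rfl⟩
      rcases eq_or_lt_of_le (hle0 j) with h | h
      · rw [h]
      · exact (hbmono i0 j h).le
  rw [hmin1, hmin2]
  refine ⟨(hab i0).2, hint i0, ?_⟩
  ext x
  simp only [Finset.mem_filter, Finset.mem_singleton]
  constructor
  · rintro ⟨hxS', hax, hxb⟩
    rw [hS'eq] at hxS'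
    rcases Finset.mem_union.mp hxS' with h | h
    · rcases Finset.mem_sdiff.mp h with ⟨hxS, hxa⟩
      have hx : x ∈ S.filter (fun y => a i0 ≤ y ∧ y ≤ b i0) :=
        Finset.mem_filter.mpr ⟨hxS, hax, hxb⟩
      rw [hint i0] at hx
      have := Finset.mem_singleton.mp hx
      exact absurd (this ▸ Finset.mem_image_of_mem a (Finset.mem_univ i0)) hxa
    · rcases Finset.mem_image.mp h with ⟨j, _, rfl⟩
      rcases eq_or_lt_of_le (hle0 j) with h' | h'
      · rw [← h']
      · exact absurd hxb (not_le.mpr (hbmono i0 j h'))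
  · rintro rfl
    refine ⟨?_, (hab i0).2.le, le_refl _⟩
    rw [hS'eq]
    exact Finset.mem_union_right _ (Finset.mem_image_of_mem b (Finset.mem_univ i0))
end

section
/- For an (e+1)-element subset S of {0,...,n} containing 0 and s ∈ {1,...,n-1}, define a 'hom' relation Hom(S,S') to hold iff there is a sequence 0 < s_1 < s'_1 < ... < s_k < s'_k (k ≥ 0) with S ∩ [s_i, s'_i] = {s_i} and S' = (S \ {s_1,...,s_k}) ∪ {s'_1,...,s'_k}. Define #(S, s) = |{t ∈ S : t > s}|. Then: if Hom(S,S') and Hom(S',S'') hold, and there exists s with s ∈ S ∩ S'' but s ∉ S', then Hom(S,S'') does not hold. -/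
open Finset

theorem Finset.card_filter_sdiff_union_add {α : Type*} [DecidableEq α] {S A B : Finset α}
    (p : α → Prop) [DecidablePred p] (hA : A ⊆ S) (hB : Disjoint S B) :
    #{x ∈ (S \ A) ∪ B | p x} + #{x ∈ A | p x} = #{x ∈ S | p x} + #{x ∈ B | p x} := by
  rw [filter_union, card_union_of_disjoint
    (disjoint_filter_filter (disjoint_of_subset_left sdiff_subset hB))]
  conv_rhs => rw [← sdiff_union_of_subset hA, filter_union,
    card_union_of_disjoint (disjoint_filter_filter sdiff_disjoint)]
  omega

theorem Finset.card_filter_image_of_injective {ι α : Type*} [DecidableEq α] {f : ι → α}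
    (hf : Function.Injective f) (s : Finset ι) (p : α → Prop) [DecidablePred p] :
    #{x ∈ s.image f | p x} = #{i ∈ s | p (f i)} := by
  rw [filter_image, card_image_of_injective _ hf]

section Interval

variable {α : Type*} [LinearOrder α] {S : Finset α} {x y : α}

theorem eq_of_mem_of_filter_eq_singleton (h : {t ∈ S | x ≤ t ∧ t ≤ y} = {x}) {t : α}
    (ht : t ∈ S) (hxt : x ≤ t) (hty : t ≤ y) : t = x :=
  mem_singleton.mp (h ▸ mem_filter.mpr ⟨ht, hxt, hty⟩)

theorem mem_of_filter_eq_singleton (h : {t ∈ S | x ≤ t ∧ t ≤ y} = {x}) : x ∈ S :=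
  (mem_filter.mp (h ▸ mem_singleton_self x)).1

theorem notMem_of_filter_eq_singleton (hxy : x < y) (h : {t ∈ S | x ≤ t ∧ t ≤ y} = {x}) :
    y ∉ S := fun hy => hxy.ne' (eq_of_mem_of_filter_eq_singleton h hy hxy.le le_rfl)

end Interval

/-- The count `#(T, s)` of the paper. -/
def countAbove (T : Finset ℕ) (s : ℕ) : ℕ := #{t ∈ T | s < t}

theorem countAbove_sdiff_image_union_image_add {S : Finset ℕ} {k : ℕ} {a b : Fin k → ℕ}
    (hab : ∀ i, a i < b i) (hba : ∀ i j, i < j → b i < a j)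
    (hint : ∀ i, {x ∈ S | a i ≤ x ∧ x ≤ b i} = {a i}) (s : ℕ) :
    countAbove ((S \ image a univ) ∪ image b univ) s + #{i | s < a i} =
      countAbove S s + #{i | s < b i} := by
  have ha : StrictMono a := fun i j hij => (hab i).trans (hba i j hij)
  have hb : StrictMono b := fun i j hij => (hba i j hij).trans (hab j)
  have hA : image a univ ⊆ S := by
    intro x hx
    obtain ⟨i, -, rfl⟩ := mem_image.mp hx
    exact mem_of_filter_eq_singleton (hint i)
  have hB : Disjoint S (image b univ) := by
    rw [disjoint_right]
    intro x hx
    obtain ⟨i, -, rfl⟩ := mem_image.mp hx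
    exact notMem_of_filter_eq_singleton (hab i) (hint i)
  rw [← card_filter_image_of_injective ha.injective, ← card_filter_image_of_injective hb.injective]
  exact card_filter_sdiff_union_add _ hA hB

namespace BHom

variable {S S' : Finset ℕ}

theorem countAbove_le (h : BHom S S') (s : ℕ) : countAbove S s ≤ countAbove S' s := by
  obtain ⟨k, a, b, hab, hba, hint, rfl⟩ := h
  have hcount := countAbove_sdiff_image_union_image_add (fun i => (hab i).2) hba hint s
  have hcard : #{i | s < a i} ≤ #{i | s < b i} :=
    card_le_card (monotone_filter_right _ fun i _ hi => hi.trans (hab i).2)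
  omega

theorem countAbove_lt (h : BHom S S') {s : ℕ} (hs : s ∈ S) (hs' : s ∉ S') :
    countAbove S s < countAbove S' s := by
  obtain ⟨k, a, b, hab, hba, hint, rfl⟩ := h
  have hcount := countAbove_sdiff_image_union_image_add (fun i => (hab i).2) hba hint s
  have hsA : s ∈ image a univ := by
    by_contra hsA
    exact hs' (mem_union_left _ (mem_sdiff.mpr ⟨hs, hsA⟩))
  obtain ⟨i, -, rfl⟩ := mem_image.mp hsA
  have hcard : #{j | a i < a j} < #{j | a i < b j} := by
    refine card_lt_card ⟨monotone_filter_right _ fun j _ hj => hj.trans (hab j).2, ?_⟩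
    intro hsub
    simpa using hsub (mem_filter.mpr ⟨mem_univ i, (hab i).2⟩)
  omega

theorem countAbove_eq (h : BHom S S') {s : ℕ} (hs : s ∈ S) (hs' : s ∈ S') :
    countAbove S' s = countAbove S s := by
  obtain ⟨k, a, b, hab, hba, hint, rfl⟩ := h
  have hcount := countAbove_sdiff_image_union_image_add (fun i => (hab i).2) hba hint s
  have hsA : s ∉ image a univ := by
    rcases mem_union.mp hs' with hs' | hs'
    · exact (mem_sdiff.mp hs').2
    · obtain ⟨i, -, rfl⟩ := mem_image.mp hs'
      exact absurd hs (notMem_of_filter_eq_singleton (hab i).2 (hint i))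
  have hcard : #{i | s < a i} = #{i | s < b i} := by
    refine congrArg card (filter_congr fun i _ => ⟨fun hi => hi.trans (hab i).2, fun hi => ?_⟩)
    by_contra! hai
    exact hsA (mem_image.mpr ⟨i, mem_univ i,
      (eq_of_mem_of_filter_eq_singleton (hint i) hs hai hi.le).symm⟩)
  rw [hcard] at hcount
  omega

end BHom

theorem stmt2_general (S S' S'' : Finset ℕ)
    (h1 : BHom S S') (h2 : BHom S' S'')
    (s : ℕ) (hs : s ∈ S) (hs'' : s ∈ S'') (hs' : s ∉ S') :
    ¬ BHom S S'' := by
  intro h3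
  have hlt : countAbove S s < countAbove S'' s :=
    (h1.countAbove_lt hs hs').trans_le (h2.countAbove_le s)
  exact hlt.ne' (h3.countAbove_eq hs hs'')

/-- Corollary 5.3 (composition obstruction): if `Hom(S,S')` and `Hom(S',S'')` are
nonzero and some label `s` lies in `S ∩ S''` but not in `S'`, then `Hom(S,S'') = 0`. -/
theorem stmt2 (n e : ℕ) (S S' S'' : Finset ℕ)
    (hS : S ⊆ Finset.range (n + 1)) (h0S : 0 ∈ S) (hcS : S.card = e + 1)
    (hS' : S' ⊆ Finset.range (n + 1)) (h0S' : 0 ∈ S') (hcS' : S'.card = e + 1)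
    (hS'' : S'' ⊆ Finset.range (n + 1)) (h0S'' : 0 ∈ S'') (hcS'' : S''.card = e + 1)
    (h1 : BHom S S') (h2 : BHom S' S'')
    (s : ℕ) (hs : s ∈ S) (hs'' : s ∈ S'') (hs' : s ∉ S') :
    ¬ BHom S S'' :=
  stmt2_general S S' S'' h1 h2 s hs hs'' hs'
end

section
/- In the path algebra of the quiver Q_{n,e} over F_2 modulo the relations of R_{n,e}, the product of elementary generators satisfies: if S →^s S' and S' →^{s-1} S'' (i.e., s ∈ S, s+1 ∉ S, S' = S \ {s} ∪ {s+1}, and s-1 ∈ S', s ∉ S', S'' = S' \ {s-1} ∪ {s}), then the composite relation Hom(S, S'') fails, i.e., there is no admissible sequence realizing S'' from S. -/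
/-- The third relation of `R_{n,e}` (Lemma 5.4): if `S →^s S'` and `S' →^{s-1} S''`
are consecutive elementary moves at adjacent positions, then `Hom(S,S'') = 0`, i.e.
no admissible sequence realizes `S''` from `S`. -/
theorem stmt7 (n e : ℕ) (S S' S'' : Finset ℕ) (s : ℕ)
    (hS : S ⊆ Finset.range (n + 1)) (h0S : 0 ∈ S) (hcS : S.card = e + 1)
    (h1s : 1 ≤ s) (hsn : s ≤ n - 1)
    (hsS : s ∈ S) (hs1S : s + 1 ∉ S)
    (hS' : S' = insert (s + 1) (S.erase s))
    (hs1S' : s - 1 ∈ S') (hsS' : s ∉ S')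
    (hS'' : S'' = insert s (S'.erase (s - 1))) :
    ¬ BHom S S'' := by
  rintro ⟨k, a, b, hab, _, hfilt, hS''eq⟩
  -- s - 1 ∈ S
  have hne : s - 1 ≠ s + 1 := by omega
  have hm1S : s - 1 ∈ S := by
    rw [hS'] at hs1S'
    rcases Finset.mem_insert.mp hs1S' with h | h
    · exact absurd h hne
    · exact Finset.mem_of_mem_erase h
  -- s - 1 ∉ S''
  have hm1S'' : s - 1 ∉ S'' := by
    rw [hS'']
    intro h
    rcases Finset.mem_insert.mp h with h | h
    · omega
    · exact (Finset.notMem_erase _ _) h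
  -- hence s - 1 ∈ image a
  have hma : s - 1 ∈ Finset.image a Finset.univ := by
    by_contra h
    exact hm1S'' (hS''eq ▸ Finset.mem_union_left _ (Finset.mem_sdiff.mpr ⟨hm1S, h⟩))
  obtain ⟨i, _, hi⟩ := Finset.mem_image.mp hma
  have h1 := hfilt i
  have h2 := hab i
  have hsmem : s ∈ S.filter (fun x => a i ≤ x ∧ x ≤ b i) :=
    Finset.mem_filter.mpr ⟨hsS, by omega, by omega⟩
  rw [h1, Finset.mem_singleton] at hsmem
  omega
end

section
/- For the bypass triangle structure: in the homotopy category over F_2, given chain maps F(β): F(Γ) → F(Γ'), F(β'): F(Γ') → F(Γ''), and module maps F(γ), F(γ'), F(γ'') satisfying F(γ)∘F(β) + F(β'')∘F(γ'') = id, F(γ')∘F(β') + F(β)∘F(γ) = id, F(γ'')∘F(β'') + F(β')∘F(γ') = id, and F(β')∘F(β) = d∘F(γ'') + F(γ'')∘d (null-homotopic), then Cone(F(β)) is homotopy equivalent to F(Γ'') via the maps η = F(γ'') ⊕ F(β') and ε = F(β'') + F(γ'). -/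
/-!
Over `𝔽₂` the mapping cone of `β : A → B` is `A × B` with differential
`(a, b) ↦ (dA a, β a + dB b)`. A map `coprod h f` out of the cone is a chain map as soon as `f`
is one and `h` is a null-homotopy of `f ∘ β`; dually, `prod g k` into the cone is a chain map as
soon as `g` is one and `k` is a null-homotopy of `β ∘ g`. This makes `η = coprod γ'' β'` and
`ε = prod β'' γ'` chain maps. The splitting identity for `C` gives `η ∘ ε = id` on the nose, and
the splitting identities for `A` and `B`, with the homotopy `β'' ∘ β' ≃ 0` and `γ' ∘ γ'' = 0`,
show that `(a, b) ↦ (γ b, 0)` is a homotopy from `ε ∘ η` to the identity.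
-/

section MappingCone

open LinearMap

variable {A B C : Type*} [AddCommGroup A] [AddCommGroup B] [AddCommGroup C]
  [Module (ZMod 2) A] [Module (ZMod 2) B] [Module (ZMod 2) C]
  {dA : A →ₗ[ZMod 2] A} {dB : B →ₗ[ZMod 2] B} {dC : C →ₗ[ZMod 2] C} {β : A →ₗ[ZMod 2] B}

variable (dA dB β) in
def mappingConeDiff : A × B →ₗ[ZMod 2] A × B :=
  (dA ∘ₗ fst (ZMod 2) A B).prod (β ∘ₗ fst (ZMod 2) A B + dB ∘ₗ snd (ZMod 2) A B)

lemma mappingConeDiff_comp_inl : mappingConeDiff dA dB β ∘ₗ inl (ZMod 2) A B = dA.prod β := by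
  ext <;> simp [mappingConeDiff]

lemma mappingConeDiff_comp_inr :
    mappingConeDiff dA dB β ∘ₗ inr (ZMod 2) A B = (0 : B →ₗ[ZMod 2] A).prod dB := by
  ext <;> simp [mappingConeDiff]

lemma coprod_comp_mappingConeDiff {h : A →ₗ[ZMod 2] C} {f : B →ₗ[ZMod 2] C}
    (hf : dC ∘ₗ f = f ∘ₗ dB) (hh : f ∘ₗ β = dC ∘ₗ h + h ∘ₗ dA) :
    dC ∘ₗ h.coprod f = h.coprod f ∘ₗ mappingConeDiff dA dB β := by
  refine prod_ext ?_ ?_ <;>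
    simp only [comp_assoc, mappingConeDiff_comp_inl, mappingConeDiff_comp_inr, coprod_comp_prod,
      comp_coprod, coprod_inl, coprod_inr, comp_zero, zero_add, hf]
  rw [hh, add_left_comm, ZModModule.add_self, add_zero]

lemma mappingConeDiff_comp_prod {g : C →ₗ[ZMod 2] A} {k : C →ₗ[ZMod 2] B}
    (hg : dA ∘ₗ g = g ∘ₗ dC) (hk : β ∘ₗ g = dB ∘ₗ k + k ∘ₗ dC) :
    mappingConeDiff dA dB β ∘ₗ g.prod k = g.prod k ∘ₗ dC := by
  simp only [mappingConeDiff, prod_comp, comp_assoc, add_comp, fst_prod, snd_prod, hg, hk]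
  rw [add_right_comm, ZModModule.add_self, zero_add]

lemma prod_comp_coprod_eq_id_add_homotopy {γ : B →ₗ[ZMod 2] A} {g : C →ₗ[ZMod 2] A}
    {k : C →ₗ[ZMod 2] B} {h : A →ₗ[ZMod 2] C} {f : B →ₗ[ZMod 2] C}
    (hgh : γ ∘ₗ β + g ∘ₗ h = LinearMap.id) (hkf : k ∘ₗ f + β ∘ₗ γ = LinearMap.id)
    (hgf : g ∘ₗ f = dA ∘ₗ γ + γ ∘ₗ dB) (hkh : k ∘ₗ h = 0) :
    g.prod k ∘ₗ h.coprod f = LinearMap.id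
      + mappingConeDiff dA dB β ∘ₗ (inl (ZMod 2) A B ∘ₗ γ ∘ₗ snd (ZMod 2) A B)
      + (inl (ZMod 2) A B ∘ₗ γ ∘ₗ snd (ZMod 2) A B) ∘ₗ mappingConeDiff dA dB β := by
  refine prod_ext ?_ ?_ <;> ext x
  all_goals simp only [mappingConeDiff, coe_comp, coe_inl, coe_inr, coe_fst, coe_snd,
    Function.comp_apply, coprod_apply, LinearMap.prod_apply, Function.prod_apply,
    LinearMap.add_apply, id_coe, id_eq, map_zero, add_zero, zero_add, Prod.mk_add_mk]
  · rw [← ZModModule.sub_eq_add, eq_sub_iff_add_eq']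
    exact LinearMap.congr_fun hgh x
  · exact LinearMap.congr_fun hkh x
  · exact LinearMap.congr_fun hgf x
  · rw [← ZModModule.sub_eq_add, eq_sub_iff_add_eq]
    exact LinearMap.congr_fun hkf x

end MappingCone

theorem stmt17_general
    (A B C : Type*) [AddCommGroup A] [AddCommGroup B] [AddCommGroup C]
    [Module (ZMod 2) A] [Module (ZMod 2) B] [Module (ZMod 2) C]
    (dA : A →ₗ[ZMod 2] A) (dB : B →ₗ[ZMod 2] B) (dC : C →ₗ[ZMod 2] C)
    (β : A →ₗ[ZMod 2] B) (β' : B →ₗ[ZMod 2] C) (β'' : C →ₗ[ZMod 2] A)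
    (hβ' : dC ∘ₗ β' = β' ∘ₗ dB) (hβ'' : dA ∘ₗ β'' = β'' ∘ₗ dC)
    (γ : B →ₗ[ZMod 2] A) (γ' : C →ₗ[ZMod 2] B) (γ'' : A →ₗ[ZMod 2] C)
    (h1 : γ ∘ₗ β + β'' ∘ₗ γ'' = LinearMap.id)
    (h2 : γ' ∘ₗ β' + β ∘ₗ γ = LinearMap.id)
    (h3 : γ'' ∘ₗ β'' + β' ∘ₗ γ' = LinearMap.id)
    (h4 : β' ∘ₗ β = dC ∘ₗ γ'' + γ'' ∘ₗ dA)
    (h5 : β'' ∘ₗ β' = dA ∘ₗ γ + γ ∘ₗ dB)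
    (h6 : β ∘ₗ β'' = dB ∘ₗ γ' + γ' ∘ₗ dC)
    (h7 : γ' ∘ₗ γ'' = 0) :
    ∀ Dcone : A × B →ₗ[ZMod 2] A × B,
      Dcone = LinearMap.prod (dA ∘ₗ LinearMap.fst (ZMod 2) A B)
          (β ∘ₗ LinearMap.fst (ZMod 2) A B + dB ∘ₗ LinearMap.snd (ZMod 2) A B) →
    ∀ η : A × B →ₗ[ZMod 2] C,
      η = γ'' ∘ₗ LinearMap.fst (ZMod 2) A B + β' ∘ₗ LinearMap.snd (ZMod 2) A B →
    ∀ ε : C →ₗ[ZMod 2] A × B, ε = LinearMap.prod β'' γ' →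
      (dC ∘ₗ η = η ∘ₗ Dcone) ∧ (Dcone ∘ₗ ε = ε ∘ₗ dC) ∧
      (∃ h₁ : C →ₗ[ZMod 2] C, η ∘ₗ ε = LinearMap.id + dC ∘ₗ h₁ + h₁ ∘ₗ dC) ∧
      (∃ h₂ : A × B →ₗ[ZMod 2] A × B,
        ε ∘ₗ η = LinearMap.id + Dcone ∘ₗ h₂ + h₂ ∘ₗ Dcone) := by
  rintro _ rfl _ rfl _ rfl
  refine ⟨coprod_comp_mappingConeDiff hβ' h4, mappingConeDiff_comp_prod hβ'' h6,
    ⟨0, ?_⟩, ⟨_, prod_comp_coprod_eq_id_add_homotopy h1 h2 h5 h7⟩⟩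
  rw [LinearMap.comp_zero, LinearMap.zero_comp, add_zero, add_zero]
  exact (LinearMap.coprod_comp_prod γ'' β' β'' γ').trans h3

/-- Proposition 7.3, abstract homological-algebra version over `F₂` (ungraded chain
complexes as modules with a square-zero differential): given chain maps
`β : A → B`, `β' : B → C`, `β'' : C → A` and module maps `γ, γ', γ''` satisfying the
three splitting identities, with `β'∘β`, `β''∘β'`, `β∘β''` null-homotopic via
`γ''`, `γ`, `γ'` respectively (and `γ'∘γ'' = 0`, as holds by construction), the
mapping cone of `β` is chain homotopy equivalent to `C` via
`η = γ'' ⊕ β'` and `ε = β'' + γ'`. -/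
theorem stmt17
    (A B C : Type*) [AddCommGroup A] [AddCommGroup B] [AddCommGroup C]
    [Module (ZMod 2) A] [Module (ZMod 2) B] [Module (ZMod 2) C]
    (dA : A →ₗ[ZMod 2] A) (dB : B →ₗ[ZMod 2] B) (dC : C →ₗ[ZMod 2] C)
    (hdA : dA ∘ₗ dA = 0) (hdB : dB ∘ₗ dB = 0) (hdC : dC ∘ₗ dC = 0)
    (β : A →ₗ[ZMod 2] B) (β' : B →ₗ[ZMod 2] C) (β'' : C →ₗ[ZMod 2] A)
    (hβ : dB ∘ₗ β = β ∘ₗ dA) (hβ' : dC ∘ₗ β' = β' ∘ₗ dB) (hβ'' : dA ∘ₗ β'' = β'' ∘ₗ dC)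
    (γ : B →ₗ[ZMod 2] A) (γ' : C →ₗ[ZMod 2] B) (γ'' : A →ₗ[ZMod 2] C)
    (h1 : γ ∘ₗ β + β'' ∘ₗ γ'' = LinearMap.id)
    (h2 : γ' ∘ₗ β' + β ∘ₗ γ = LinearMap.id)
    (h3 : γ'' ∘ₗ β'' + β' ∘ₗ γ' = LinearMap.id)
    (h4 : β' ∘ₗ β = dC ∘ₗ γ'' + γ'' ∘ₗ dA)
    (h5 : β'' ∘ₗ β' = dA ∘ₗ γ + γ ∘ₗ dB)
    (h6 : β ∘ₗ β'' = dB ∘ₗ γ' + γ' ∘ₗ dC)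
    (h7 : γ' ∘ₗ γ'' = 0) :
    ∀ Dcone : A × B →ₗ[ZMod 2] A × B,
      Dcone = LinearMap.prod (dA ∘ₗ LinearMap.fst (ZMod 2) A B)
          (β ∘ₗ LinearMap.fst (ZMod 2) A B + dB ∘ₗ LinearMap.snd (ZMod 2) A B) →
    ∀ η : A × B →ₗ[ZMod 2] C,
      η = γ'' ∘ₗ LinearMap.fst (ZMod 2) A B + β' ∘ₗ LinearMap.snd (ZMod 2) A B →
    ∀ ε : C →ₗ[ZMod 2] A × B, ε = LinearMap.prod β'' γ' →
      (dC ∘ₗ η = η ∘ₗ Dcone) ∧ (Dcone ∘ₗ ε = ε ∘ₗ dC) ∧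
      (∃ h₁ : C →ₗ[ZMod 2] C, η ∘ₗ ε = LinearMap.id + dC ∘ₗ h₁ + h₁ ∘ₗ dC) ∧
      (∃ h₂ : A × B →ₗ[ZMod 2] A × B,
        ε ∘ₗ η = LinearMap.id + Dcone ∘ₗ h₂ + h₂ ∘ₗ Dcone) :=
  stmt17_general A B C dA dB dC β β' β'' hβ' hβ'' γ γ' γ'' h1 h2 h3 h4 h5 h6 h7
end

section
/- Serre-duality sequence exactness (combinatorial core of Lemma 9.6): Let Γ ∈ B_{n,e} with Γ_* = {0, s_1, ..., s_e}, s_1 ≥ 2. Define S(Γ)^0_* = {0, s_2 - 1, ..., s_e - 1, n} and S(Γ)^1_* = {0, s_1 - 1, s_3 - 1, ..., s_e - 1, n}. Then for any basic Γ' ∈ B_{n,e}: (a) Hom(Γ, S(Γ)^0) ≠ 0; (b) Hom(Γ, S(Γ)^1) = 0; (c) if Hom(Γ, Γ') ≠ 0 then Hom(Γ', S(Γ)^0) ≠ 0; (d) if Hom(Γ, Γ') = 0 and Hom(Γ', S(Γ)^0) ≠ 0, then Hom(Γ', S(Γ)^1) ≠ 0. -/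
open Finset


/-- two functions strictly monotone on `range m` with equal images agree on `range m`. -/
lemma sm_image_eq {m : ℕ} {c d : ℕ → ℕ}
    (hc : ∀ i j, i < j → j < m → c i < c j)
    (hd : ∀ i j, i < j → j < m → d i < d j)
    (h : (Finset.range m).image c = (Finset.range m).image d) :
    ∀ j < m, c j = d j := by
  have hcinj : Set.InjOn c (Finset.range m) := by
    intro i hi j hj hij
    simp only [coe_range, Set.mem_Iio] at hi hj
    rcases lt_trichotomy i j with h' | h' | h'
    · exact absurd hij (hc i j h' hj).ne
    · exact h'
    · exact absurd hij (hc j i h' hi).ne'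
  have hcard : ((Finset.range m).image c).card = m := by
    rw [Finset.card_image_of_injOn hcinj, Finset.card_range]
  set s := (Finset.range m).image c with hs
  have hC : (fun j : Fin m => c (j : ℕ)) = s.orderEmbOfFin hcard := by
    apply Finset.orderEmbOfFin_unique
    · intro x; exact Finset.mem_image_of_mem c (Finset.mem_range.2 x.2)
    · intro i j hij; exact hc i j hij j.2
  have hD : (fun j : Fin m => d (j : ℕ)) = s.orderEmbOfFin hcard := by
    apply Finset.orderEmbOfFin_unique
    · intro x; rw [h]; exact Finset.mem_image_of_mem d (Finset.mem_range.2 x.2)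
    · intro i j hij; exact hd i j hij j.2
  intro j hj
  have := congrFun (hC.trans hD.symm) ⟨j, hj⟩
  exact this

/-- Forward direction: BHom implies positionwise condition. -/
lemma bhom_forward {m : ℕ} {c c' : ℕ → ℕ} (hc : StrictMono c) (hc' : StrictMono c')
    (hB : BHom ((Finset.range m).image c) ((Finset.range m).image c')) :
    ∀ j < m, c' j = c j ∨ (c j < c' j ∧ (j + 1 < m → c' j < c (j + 1))) := by
  obtain ⟨k, a, b, h1, h2, h3, h4⟩ := hB
  set S := (Finset.range m).image c with hSdef
  have hainj : Function.Injective a := by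
    intro i j hij
    rcases lt_trichotomy i j with h' | h' | h'
    · have := h2 i j h'; have := (h1 i).2; omega
    · exact h'
    · have := h2 j i h'; have := (h1 j).2; omega
  have ha_mem : ∀ i, a i ∈ S := by
    intro i
    have : a i ∈ S.filter (fun x => a i ≤ x ∧ x ≤ b i) := by
      rw [h3 i]; exact Finset.mem_singleton_self _
    exact (Finset.mem_filter.1 this).1
  have hgap : ∀ i y, y ∈ S → a i < y → b i < y := by
    intro i y hy hlt
    by_contra hle
    push_neg at hle
    have : y ∈ S.filter (fun x => a i ≤ x ∧ x ≤ b i) :=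
      Finset.mem_filter.2 ⟨hy, le_of_lt hlt, hle⟩
    rw [h3 i] at this
    exact absurd (Finset.mem_singleton.1 this) hlt.ne'
  classical
  set f : ℕ → ℕ := fun x => if h : ∃ i, a i = x then b h.choose else x with hfdef
  have hfa : ∀ i, f (a i) = b i := by
    intro i
    have hex : ∃ i', a i' = a i := ⟨i, rfl⟩
    simp only [hfdef, dif_pos hex]
    exact congrArg b (hainj hex.choose_spec)
  have hfid : ∀ x, (¬ ∃ i, a i = x) → f x = x := by
    intro x hx; simp only [hfdef, dif_neg hx]
  have hfge : ∀ x, x ≤ f x := by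
    intro x
    by_cases hx : ∃ i, a i = x
    · simp only [hfdef, dif_pos hx]
      have := hx.choose_spec
      have := (h1 hx.choose).2
      omega
    · rw [hfid x hx]
  set d : ℕ → ℕ := fun j => f (c j) with hddef
  have hdmono : ∀ i j, i < j → j < m → d i < d j := by
    intro i j hij hj
    have hcjS : c j ∈ S := Finset.mem_image_of_mem c (Finset.mem_range.2 hj)
    by_cases hx : ∃ i0, a i0 = c i
    · obtain ⟨i0, hi0⟩ := hx
      have hdi : d i = b i0 := by rw [hddef]; simp only [← hi0, hfa]
      have : b i0 < c j := hgap i0 (c j) hcjS (hi0 ▸ hc hij)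
      calc d i = b i0 := hdi
        _ < c j := this
        _ ≤ d j := hfge (c j)
    · have hdi : d i = c i := hfid _ hx
      calc d i = c i := hdi
        _ < c j := hc hij
        _ ≤ d j := hfge (c j)
  have himg : (Finset.range m).image d = (Finset.range m).image c' := by
    rw [h4]
    ext x
    constructor
    · intro hx
      obtain ⟨j, hj, rfl⟩ := Finset.mem_image.1 hx
      rw [Finset.mem_range] at hj
      by_cases hxx : ∃ i0, a i0 = c j
      · obtain ⟨i0, hi0⟩ := hxx
        have : d j = b i0 := by rw [hddef]; simp only [← hi0, hfa]
        rw [this]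
        exact Finset.mem_union_right _ (Finset.mem_image.2 ⟨i0, Finset.mem_univ _, rfl⟩)
      · have : d j = c j := hfid _ hxx
        rw [this]
        refine Finset.mem_union_left _ (Finset.mem_sdiff.2 ⟨Finset.mem_image_of_mem c (Finset.mem_range.2 hj), ?_⟩)
        intro hA
        obtain ⟨i0, _, hi0⟩ := Finset.mem_image.1 hA
        exact hxx ⟨i0, hi0⟩
    · intro hx
      rcases Finset.mem_union.1 hx with hx | hx
      · obtain ⟨hxS, hxA⟩ := Finset.mem_sdiff.1 hx
        obtain ⟨j, hj, rfl⟩ := Finset.mem_image.1 hxS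
        refine Finset.mem_image.2 ⟨j, hj, ?_⟩
        exact hfid _ (fun ⟨i0, hi0⟩ => hxA (Finset.mem_image.2 ⟨i0, Finset.mem_univ _, hi0⟩))
      · obtain ⟨i0, _, rfl⟩ := Finset.mem_image.1 hx
        obtain ⟨j, hj, hj2⟩ := Finset.mem_image.1 (ha_mem i0)
        refine Finset.mem_image.2 ⟨j, hj, ?_⟩
        rw [hddef]; simp only [hj2, hfa]
  have huniq : ∀ j < m, d j = c' j :=
    sm_image_eq hdmono (fun i j hij _ => hc' hij) himg
  intro j hj
  by_cases hx : ∃ i0, a i0 = c j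
  · obtain ⟨i0, hi0⟩ := hx
    have hdj : d j = b i0 := by rw [hddef]; simp only [← hi0, hfa]
    have hcj : c' j = b i0 := (huniq j hj).symm.trans hdj
    right
    refine ⟨?_, ?_⟩
    · rw [hcj, ← hi0]; exact (h1 i0).2
    · intro hj1
      rw [hcj]
      exact hgap i0 _ (Finset.mem_image_of_mem c (Finset.mem_range.2 hj1)) (hi0 ▸ hc (Nat.lt_succ_self j))
  · left
    rw [← huniq j hj, hddef]
    exact hfid _ hx

/-- Backward direction: positionwise condition implies BHom. -/
lemma bhom_backward {m : ℕ} {c c' : ℕ → ℕ} (hc : StrictMono c) (hc' : StrictMono c')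
    (hpos : ∀ j < m, c' j ≠ c j → 0 < c j)
    (hP : ∀ j < m, c' j = c j ∨ (c j < c' j ∧ (j + 1 < m → c' j < c (j + 1)))) :
    BHom ((Finset.range m).image c) ((Finset.range m).image c') := by
  classical
  set S := (Finset.range m).image c with hSdef
  set J : Finset ℕ := (Finset.range m).filter (fun j => c' j ≠ c j) with hJdef
  set k := J.card with hkdef
  set g : Fin k ↪o ℕ := J.orderEmbOfFin rfl with hgdef
  have hgJ : ∀ i, g i ∈ J := fun i => Finset.orderEmbOfFin_mem J rfl i
  have hgm : ∀ i, g i < m := fun i => Finset.mem_range.1 (Finset.mem_filter.1 (hgJ i)).1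
  have hgne : ∀ i, c' (g i) ≠ c (g i) := fun i => (Finset.mem_filter.1 (hgJ i)).2
  have hglt : ∀ i, c (g i) < c' (g i) := by
    intro i
    rcases hP (g i) (hgm i) with h | h
    · exact absurd h (hgne i)
    · exact h.1
  have hgsurj : ∀ x ∈ J, ∃ i, g i = x := by
    intro x hx
    have : x ∈ Set.range g := by rw [hgdef, Finset.range_orderEmbOfFin]; exact_mod_cast hx
    exact this
  refine ⟨k, fun i => c (g i), fun i => c' (g i), ?_, ?_, ?_, ?_⟩
  · intro i
    exact ⟨hpos (g i) (hgm i) (hgne i), hglt i⟩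
  · intro i j hij
    have h1 : (g i : ℕ) < g j := g.strictMono hij
    have h2 : g i + 1 < m := lt_of_le_of_lt h1 (hgm j)
    have h3 : c' (g i) < c (g i + 1) := by
      rcases hP (g i) (hgm i) with h | h
      · exact absurd h (hgne i)
      · exact h.2 h2
    exact lt_of_lt_of_le h3 (hc.monotone h1)
  · intro i
    ext x
    simp only [Finset.mem_filter, Finset.mem_singleton]
    constructor
    · rintro ⟨hxS, hx1, hx2⟩
      obtain ⟨j, hj, rfl⟩ := Finset.mem_image.1 hxS
      rw [Finset.mem_range] at hj
      have hji : g i ≤ j := by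
        by_contra hji
        push_neg at hji
        exact absurd (hc hji) (not_lt.2 hx1)
      rcases eq_or_lt_of_le hji with h | h
      · rw [← h]
      · exfalso
        have h2 : g i + 1 < m ∨ g i + 1 = j := by omega
        have hnext : c' (g i) < c (g i + 1) := by
          rcases hP (g i) (hgm i) with hh | hh
          · exact absurd hh (hgne i)
          · exact hh.2 (by omega)
        have : c (g i + 1) ≤ c j := hc.monotone (by omega)
        omega
    · rintro rfl
      exact ⟨Finset.mem_image_of_mem c (Finset.mem_range.2 (hgm i)), le_refl _, le_of_lt (hglt i)⟩
  · ext x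
    constructor
    · intro hx
      obtain ⟨j, hj, rfl⟩ := Finset.mem_image.1 hx
      rw [Finset.mem_range] at hj
      by_cases hjJ : j ∈ J
      · obtain ⟨i, rfl⟩ := hgsurj j hjJ
        exact Finset.mem_union_right _ (Finset.mem_image.2 ⟨i, Finset.mem_univ _, rfl⟩)
      · have heq : c' j = c j := by
          by_contra hne
          exact hjJ (Finset.mem_filter.2 ⟨Finset.mem_range.2 hj, hne⟩)
        rw [heq]
        refine Finset.mem_union_left _ (Finset.mem_sdiff.2 ⟨Finset.mem_image_of_mem c (Finset.mem_range.2 hj), ?_⟩)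
        intro hA
        obtain ⟨i, _, hi⟩ := Finset.mem_image.1 hA
        have : (g i : ℕ) = j := hc.injective hi
        exact hjJ (this ▸ hgJ i)
    · intro hx
      rcases Finset.mem_union.1 hx with hx | hx
      · obtain ⟨hxS, hxA⟩ := Finset.mem_sdiff.1 hx
        obtain ⟨j, hj, rfl⟩ := Finset.mem_image.1 hxS
        rw [Finset.mem_range] at hj
        have hjJ : j ∉ J := by
          intro hjJ
          obtain ⟨i, rfl⟩ := hgsurj j hjJ
          exact hxA (Finset.mem_image.2 ⟨i, Finset.mem_univ _, rfl⟩)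
        have heq : c' j = c j := by
          by_contra hne
          exact hjJ (Finset.mem_filter.2 ⟨Finset.mem_range.2 hj, hne⟩)
        exact Finset.mem_image.2 ⟨j, Finset.mem_range.2 hj, heq⟩
      · obtain ⟨i, _, rfl⟩ := Finset.mem_image.1 hx
        exact Finset.mem_image.2 ⟨g i, Finset.mem_range.2 (hgm i), rfl⟩

section Concrete
variable (n e : ℕ) (s : Fin e → ℕ)

/-- extension of `s` to `ℕ` with strictly increasing junk tail above `n`. -/
def uext : ℕ → ℕ := fun i => if h : i < e then s ⟨i, h⟩ else n + i + 2

def cG : ℕ → ℕ := fun j => if j = 0 then 0 else uext n e s (j - 1)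

def cS0 : ℕ → ℕ := fun j =>
  if j = 0 then 0 else if j < e then uext n e s j - 1 else n + (j - e)

def cS1 : ℕ → ℕ := fun j =>
  if j = 0 then 0 else if j = 1 then uext n e s 0 - 1
  else if j < e then uext n e s j - 1 else n + (j - e)

variable {n e s}
variable (he : 2 ≤ e) (hmono : StrictMono s) (h2 : ∀ i, 2 ≤ s i) (hn : ∀ i, s i ≤ n)

include hmono h2 hn in
lemma uext_mono : StrictMono (uext n e s) := by
  apply strictMono_nat_of_lt_succ
  intro i
  unfold uext
  by_cases h : i + 1 < e
  · rw [dif_pos (by omega), dif_pos h]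
    exact hmono (by simp [Fin.lt_def])
  · by_cases h' : i < e
    · rw [dif_pos h', dif_neg h]
      have := hn ⟨i, h'⟩; omega
    · rw [dif_neg h', dif_neg h]; omega

include h2 in
lemma uext_ge2 : ∀ i, 2 ≤ uext n e s i := by
  intro i; unfold uext
  by_cases h : i < e
  · rw [dif_pos h]; exact h2 _
  · rw [dif_neg h]; omega

include hn in
lemma uext_le : ∀ i < e, uext n e s i ≤ n := by
  intro i h; unfold uext; rw [dif_pos h]; exact hn _

include he hmono h2 hn in
lemma cG_mono : StrictMono (cG n e s) := by
  have hu := uext_mono hmono h2 hn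
  have hu2 := uext_ge2 (s := s) (n := n) h2
  apply strictMono_nat_of_lt_succ
  intro i
  simp only [cG, Nat.add_sub_cancel]
  have h20 := hu2 0
  rcases Nat.eq_zero_or_pos i with rfl | hi
  · split_ifs <;> first | omega | exact (False.elim ‹False›)
  · have h3 := hu (by omega : i - 1 < i)
    split_ifs <;> first | omega | exact (False.elim ‹False›)

include he hmono h2 hn in
lemma cS0_mono : StrictMono (cS0 n e s) := by
  have hu := uext_mono hmono h2 hn
  have hu2 := uext_ge2 (s := s) (n := n) h2
  have hul := uext_le (s := s) (e := e) hn
  apply strictMono_nat_of_lt_succ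
  intro i
  simp only [cS0]
  have h1 : uext n e s i < uext n e s (i + 1) := hu (Nat.lt_succ_self i)
  have h2i := hu2 i
  have h2i1 := hu2 (i + 1)
  by_cases hie : i < e
  · have := hul i hie
    split_ifs <;> first | omega | exact (False.elim ‹False›)
  · split_ifs <;> first | omega | exact (False.elim ‹False›)

include he hmono h2 hn in
lemma cS1_mono : StrictMono (cS1 n e s) := by
  have hu := uext_mono hmono h2 hn
  have hu2 := uext_ge2 (s := s) (n := n) h2
  have hul := uext_le (s := s) (e := e) hn
  apply strictMono_nat_of_lt_succ
  intro i
  simp only [cS1]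
  have h1 : uext n e s i < uext n e s (i + 1) := hu (Nat.lt_succ_self i)
  have h01 : uext n e s 0 < uext n e s (i + 1) := hu (by omega)
  have h00 : uext n e s 0 ≤ uext n e s i := hu.monotone (by omega)
  have h2i := hu2 i
  have h2i1 := hu2 (i + 1)
  have h20 := hu2 0
  have hl0 := hul 0 (by omega)
  by_cases hie : i < e
  · have := hul i hie
    split_ifs <;> first | omega | exact (False.elim ‹False›)
  · split_ifs <;> first | omega | exact (False.elim ‹False›)

lemma uext_eq {i : ℕ} (h : i < e) : uext n e s i = s ⟨i, h⟩ := dif_pos h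

include he in
lemma E1 : insert 0 (Finset.image s Finset.univ) = (Finset.range (e+1)).image (cG n e s) := by
  ext x
  simp only [mem_insert, mem_image, mem_univ, true_and, mem_range]
  constructor
  · rintro (rfl | ⟨i, rfl⟩)
    · exact ⟨0, by omega, by simp [cG]⟩
    · refine ⟨(i : ℕ) + 1, by omega, ?_⟩
      simp only [cG, Nat.add_sub_cancel, if_neg (Nat.succ_ne_zero _)]
      rw [uext_eq i.2]
  · rintro ⟨j, hj, rfl⟩
    rcases Nat.eq_zero_or_pos j with rfl | hj0
    · left; simp [cG]
    · right
      refine ⟨⟨j - 1, by omega⟩, ?_⟩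
      simp only [cG, if_neg (by omega : ¬ j = 0)]
      rw [uext_eq (show j - 1 < e by omega)]

include he in
lemma E2 : insert 0 (insert n
      ((Finset.univ.filter (fun i : Fin e => 0 < (i : ℕ))).image (fun i => s i - 1)))
    = (Finset.range (e+1)).image (cS0 n e s) := by
  ext x
  simp only [mem_insert, mem_image, mem_filter, mem_univ, true_and, mem_range]
  constructor
  · rintro (rfl | rfl | ⟨i, hi, rfl⟩)
    · exact ⟨0, by omega, by simp [cS0]⟩
    · refine ⟨e, by omega, ?_⟩
      simp only [cS0, if_neg (by omega : ¬ e = 0), if_neg (lt_irrefl e)]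
      omega
    · refine ⟨(i : ℕ), by omega, ?_⟩
      simp only [cS0, if_neg (by omega : ¬ (i:ℕ) = 0), if_pos i.2]
      rw [uext_eq i.2]
  · rintro ⟨j, hj, rfl⟩
    rcases Nat.eq_zero_or_pos j with rfl | hj0
    · left; simp [cS0]
    · by_cases hje : j < e
      · right; right
        refine ⟨⟨j, hje⟩, by simpa using hj0, ?_⟩
        simp only [cS0, if_neg (by omega : ¬ j = 0), if_pos hje]
        rw [uext_eq hje]
      · right; left
        simp only [cS0, if_neg (by omega : ¬ j = 0), if_neg hje]
        omega

include he in
lemma E3 : insert 0 (insert n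
      ((Finset.univ.filter (fun i : Fin e => (i : ℕ) ≠ 1)).image (fun i => s i - 1)))
    = (Finset.range (e+1)).image (cS1 n e s) := by
  ext x
  simp only [mem_insert, mem_image, mem_filter, mem_univ, true_and, mem_range]
  constructor
  · rintro (rfl | rfl | ⟨i, hi, rfl⟩)
    · exact ⟨0, by omega, by simp [cS1]⟩
    · refine ⟨e, by omega, ?_⟩
      simp only [cS1, if_neg (by omega : ¬ e = 0), if_neg (by omega : ¬ e = 1),
        if_neg (lt_irrefl e)]
      omega
    · rcases Nat.eq_zero_or_pos (i : ℕ) with hi0 | hi0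
      · refine ⟨1, by omega, ?_⟩
        have hie : (⟨0, by omega⟩ : Fin e) = i := by apply Fin.ext; simp [hi0]
        rw [← hie]
        simp [cS1, uext_eq (show 0 < e by omega)]
      · refine ⟨(i : ℕ), by omega, ?_⟩
        simp only [cS1, if_neg (by omega : ¬ (i:ℕ) = 0), if_neg hi, if_pos i.2]
        rw [uext_eq i.2]
  · rintro ⟨j, hj, rfl⟩
    rcases Nat.eq_zero_or_pos j with rfl | hj0
    · left; simp [cS1]
    · rcases Nat.eq_or_lt_of_le hj0 with hj1 | hj1
      · right; right
        refine ⟨⟨0, by omega⟩, by simp, ?_⟩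
        simp only [cS1, if_neg (by omega : ¬ j = 0), if_pos hj1.symm]
        rw [uext_eq (by omega : 0 < e)]
      · by_cases hje : j < e
        · right; right
          refine ⟨⟨j, hje⟩, by simp; omega, ?_⟩
          simp only [cS1, if_neg (by omega : ¬ j = 0), if_neg (by omega : ¬ j = 1), if_pos hje]
          rw [uext_eq hje]
        · right; left
          simp only [cS1, if_neg (by omega : ¬ j = 0), if_neg (by omega : ¬ j = 1), if_neg hje]
          omega

lemma cG_zero : cG n e s 0 = 0 := rfl

lemma cG_pos {j : ℕ} (hj : 0 < j) : cG n e s j = uext n e s (j - 1) := if_neg (by omega)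

lemma cS0_zero : cS0 n e s 0 = 0 := rfl

lemma cS0_mid {j : ℕ} (h0 : 0 < j) (hje : j < e) : cS0 n e s j = uext n e s j - 1 := by
  simp only [cS0]; rw [if_neg (by omega), if_pos hje]

lemma cS0_top {j : ℕ} (h0 : 0 < j) (hje : e ≤ j) : cS0 n e s j = n + (j - e) := by
  simp only [cS0]; rw [if_neg (by omega), if_neg (by omega)]

lemma cS1_zero : cS1 n e s 0 = 0 := rfl

lemma cS1_one : cS1 n e s 1 = uext n e s 0 - 1 := by
  simp only [cS1]; rw [if_neg (by omega)]; simp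

lemma cS1_mid {j : ℕ} (h0 : 2 ≤ j) (hje : j < e) : cS1 n e s j = uext n e s j - 1 := by
  simp only [cS1]; rw [if_neg (by omega), if_neg (by omega), if_pos hje]

lemma cS1_top {j : ℕ} (h0 : 2 ≤ j) (hje : e ≤ j) : cS1 n e s j = n + (j - e) := by
  simp only [cS1]; rw [if_neg (by omega), if_neg (by omega), if_neg (by omega)]

end Concrete

section Gp
variable (n E : ℕ) (G : Finset ℕ) (h : G.card = E)

/-- the sorted enumeration of `G`, extended by junk above `n`. -/
def cGp : ℕ → ℕ := fun j => if h' : j < E then G.orderEmbOfFin h ⟨j, h'⟩ else n + 1 + j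

variable {n E G h}
variable (hsub : G ⊆ Finset.range (n + 1)) (h0 : 0 ∈ G) (hE : 0 < E)

include hsub in
lemma cGp_le : ∀ j < E, cGp n E G h j ≤ n := by
  intro j hj
  simp only [cGp, dif_pos hj]
  have := hsub (Finset.orderEmbOfFin_mem G h ⟨j, hj⟩)
  rw [Finset.mem_range] at this
  omega

include hsub in
lemma cGp_mono : StrictMono (cGp n E G h) := by
  apply strictMono_nat_of_lt_succ
  intro i
  by_cases h1 : i + 1 < E
  · simp only [cGp, dif_pos h1, dif_pos (by omega : i < E)]
    exact (G.orderEmbOfFin h).strictMono (by simp [Fin.lt_def])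
  · by_cases h2 : i < E
    · have := cGp_le (h := h) hsub i h2
      simp only [cGp, dif_pos h2] at this
      simp only [cGp, dif_pos h2, dif_neg h1]
      omega
    · simp only [cGp, dif_neg h2, dif_neg h1]
      omega

include h0 hE in
lemma cGp_zero : cGp n E G h 0 = 0 := by
  simp only [cGp, dif_pos hE]
  have h1 : G.orderEmbOfFin h ⟨0, hE⟩ = G.min' ⟨0, h0⟩ := Finset.orderEmbOfFin_zero h hE
  have h2 : G.min' ⟨0, h0⟩ ≤ 0 := Finset.min'_le _ _ h0
  omega

lemma cGp_img : (Finset.range E).image (cGp n E G h) = G := by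
  ext x
  constructor
  · intro hx
    obtain ⟨j, hj, rfl⟩ := Finset.mem_image.1 hx
    rw [Finset.mem_range] at hj
    simp only [cGp, dif_pos hj]
    exact Finset.orderEmbOfFin_mem G h _
  · intro hx
    have : x ∈ Set.range (G.orderEmbOfFin h) := by
      rw [Finset.range_orderEmbOfFin]; exact_mod_cast hx
    obtain ⟨i, hi⟩ := this
    refine Finset.mem_image.2 ⟨(i : ℕ), Finset.mem_range.2 i.2, ?_⟩
    simp only [cGp, dif_pos i.2]
    rw [← hi]

end Gp

/-- The exactness computation in the proof of Lemma 9.6 (Serre duality: `F(S(Γ))` is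
a projective resolution of `DR ⊗_R P(Γ)`). Let `Γ_* = {0, s_1, ..., s_e}` with
`s_1 ≥ 2`, and set `S(Γ)^0_* = {0, s_2-1, ..., s_e-1, n}` and
`S(Γ)^1_* = {0, s_1-1, s_3-1, ..., s_e-1, n}`. Then
(a) `Hom(Γ, S(Γ)^0) ≠ 0`; (b) `Hom(Γ, S(Γ)^1) = 0`; and for every basic
`Γ' ∈ B_{n,e}`: (c) if `Hom(Γ, Γ') ≠ 0` then `Hom(Γ', S(Γ)^0) ≠ 0`;
(d) if `Hom(Γ, Γ') = 0` and `Hom(Γ', S(Γ)^0) ≠ 0` then `Hom(Γ', S(Γ)^1) ≠ 0`. -/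
theorem stmt19 (n e : ℕ) (he : 2 ≤ e) (s : Fin e → ℕ)
    (hmono : StrictMono s) (h2 : ∀ i, 2 ≤ s i) (hn : ∀ i, s i ≤ n) :
    BHom (insert 0 (Finset.image s Finset.univ))
        (insert 0 (insert n
          ((Finset.univ.filter (fun i : Fin e => 0 < (i : ℕ))).image
            (fun i => s i - 1)))) ∧
    ¬ BHom (insert 0 (Finset.image s Finset.univ))
        (insert 0 (insert n
          ((Finset.univ.filter (fun i : Fin e => (i : ℕ) ≠ 1)).image
            (fun i => s i - 1)))) ∧
    (∀ Γ' : Finset ℕ, Γ' ⊆ Finset.range (n + 1) → 0 ∈ Γ' → Γ'.card = e + 1 →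
      (BHom (insert 0 (Finset.image s Finset.univ)) Γ' →
        BHom Γ' (insert 0 (insert n
          ((Finset.univ.filter (fun i : Fin e => 0 < (i : ℕ))).image
            (fun i => s i - 1))))) ∧
      (¬ BHom (insert 0 (Finset.image s Finset.univ)) Γ' →
        BHom Γ' (insert 0 (insert n
          ((Finset.univ.filter (fun i : Fin e => 0 < (i : ℕ))).image
            (fun i => s i - 1)))) →
        BHom Γ' (insert 0 (insert n
          ((Finset.univ.filter (fun i : Fin e => (i : ℕ) ≠ 1)).image
            (fun i => s i - 1)))))) := by
  have hu := uext_mono hmono h2 hn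
  have hu2 := uext_ge2 (s := s) (n := n) h2
  have hul := uext_le (s := s) (e := e) hn
  have hmG := cG_mono he hmono h2 hn
  have hm0 := cS0_mono he hmono h2 hn
  have hm1 := cS1_mono he hmono h2 hn
  have hposG : ∀ (c' : ℕ → ℕ), c' 0 = 0 →
      ∀ j < e + 1, c' j ≠ cG n e s j → 0 < cG n e s j := by
    intro c' hc0 j hj hne
    rcases Nat.eq_zero_or_pos j with rfl | hj0
    · rw [hc0, cG_zero] at hne; exact absurd rfl hne
    · rw [cG_pos hj0]; have := hu2 (j - 1); omega
  rw [E1 (n := n) he, E2 (n := n) he, E3 (n := n) he]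
  refine ⟨?_, ?_, ?_⟩
  · -- (a)
    apply bhom_backward hmG hm0 (hposG _ (cS0_zero (n := n)))
    intro j hj
    rcases Nat.eq_zero_or_pos j with rfl | hj0
    · left; rw [cS0_zero, cG_zero]
    by_cases hje : j < e
    · rw [cS0_mid hj0 hje, cG_pos hj0, cG_pos (by omega : 0 < j + 1)]
      simp only [Nat.add_sub_cancel]
      have h1 := hu (show j - 1 < j by omega)
      have h3 := hu2 j
      omega
    · rw [cS0_top hj0 (by omega), cG_pos hj0]
      have h1 := hul (j - 1) (by omega)
      omega
  · -- (b)
    intro hB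
    have hP := bhom_forward hmG hm1 hB
    have h1 := hP 1 (by omega)
    rw [cS1_one, cG_pos (by omega : 0 < 1)] at h1
    simp only [Nat.sub_self] at h1
    have := hu2 0
    omega
  · -- (c), (d)
    intro Γ' hsub h0' hcard
    have hmGp := cGp_mono (n := n) (h := hcard) hsub
    have hz := cGp_zero (n := n) (h := hcard) h0' (by omega : 0 < e + 1)
    have hle := cGp_le (n := n) (h := hcard) hsub
    have himg := cGp_img (n := n) (E := e + 1) (G := Γ') (h := hcard)
    rw [← himg]
    have hposGp : ∀ (c' : ℕ → ℕ), c' 0 = 0 →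
        ∀ j < e + 1, c' j ≠ cGp n (e+1) Γ' hcard j → 0 < cGp n (e+1) Γ' hcard j := by
      intro c' hc0 j hj hne
      rcases Nat.eq_zero_or_pos j with rfl | hj0
      · rw [hc0, hz] at hne; exact absurd rfl hne
      · have := hmGp hj0; omega
    constructor
    · -- (c)
      intro hB
      have hP1 := bhom_forward hmG hmGp hB
      apply bhom_backward hmGp hm0 (hposGp _ (cS0_zero (n := n)))
      intro j hj
      rcases Nat.eq_zero_or_pos j with rfl | hj0
      · left; rw [cS0_zero, hz]
      by_cases hje : j < e
      · have hA := hP1 j (by omega)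
        have hB2 := hP1 (j + 1) (by omega)
        rw [cG_pos hj0, cG_pos (by omega : 0 < j + 1)] at hA
        rw [cG_pos (by omega : 0 < j + 1), cG_pos (by omega : 0 < j + 1 + 1)] at hB2
        simp only [Nat.add_sub_cancel] at hA hB2
        rw [cS0_mid hj0 hje]
        have h1 := hu (show j - 1 < j by omega)
        have h3 := hu2 j
        omega
      · rw [cS0_top hj0 (by omega)]
        have h4 := hle j (by omega)
        omega
    · -- (d)
      intro hnB hB0
      have hP0 := bhom_forward hmGp hm0 hB0
      have hnP1 : ¬ (∀ j < e + 1, cGp n (e+1) Γ' hcard j = cG n e s j ∨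
          (cG n e s j < cGp n (e+1) Γ' hcard j ∧
            (j + 1 < e + 1 → cGp n (e+1) Γ' hcard j < cG n e s (j + 1)))) :=
        fun hP => hnB (bhom_backward hmG hmGp (hposG _ hz) hP)
      push_neg at hnP1
      obtain ⟨j, hj, hne, hor⟩ := hnP1
      have hj0 : 0 < j := by
        rcases Nat.eq_zero_or_pos j with rfl | hj0
        · rw [hz, cG_zero] at hne; exact absurd rfl hne
        · exact hj0
      -- cGp j < uext (j-1)
      have hlt : cGp n (e+1) Γ' hcard j < uext n e s (j - 1) := by
        rw [cG_pos hj0] at hne hor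
        by_cases hje : j < e
        · have hA := hP0 j (by omega)
          rw [cS0_mid hj0 hje] at hA
          rw [cG_pos (by omega : 0 < j + 1)] at hor
          simp only [Nat.add_sub_cancel] at hor
          have h3 := hu2 j
          have h1 := hu (show j - 1 < j by omega)
          omega
        · omega
      -- j must be 1
      have hj1 : j = 1 := by
        by_contra hj1
        have hj2 : 2 ≤ j := by omega
        have hjle : j ≤ e := by omega
        have hA := hP0 (j - 1) (by omega)
        rw [cS0_mid (by omega) (by omega : j - 1 < e)] at hA
        rw [Nat.sub_add_cancel (by omega : 1 ≤ j)] at hA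
        have hmgp := hmGp (show j - 1 < j by omega)
        have hu21 := hu2 (j - 1)
        omega
      subst hj1
      have hkey : cGp n (e+1) Γ' hcard 1 < uext n e s 0 := by simpa using hlt
      apply bhom_backward hmGp hm1 (hposGp _ (cS1_zero (n := n)))
      intro i hi
      rcases Nat.eq_zero_or_pos i with rfl | hi0
      · left; rw [cS1_zero, hz]
      rcases Nat.eq_or_lt_of_le hi0 with hi1 | hi1
      · obtain rfl : i = 1 := by omega
        rw [cS1_one]
        have hA := hP0 1 (by omega)
        rw [cS0_mid (by omega) (by omega : 1 < e)] at hA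
        have h01 := hu (show 0 < 1 by omega)
        have h20 := hu2 0
        omega
      by_cases hie : i < e
      · have hA := hP0 i (by omega)
        rw [cS0_mid hi0 hie] at hA
        rw [cS1_mid (by omega) hie]
        omega
      · rw [cS1_top (by omega) (by omega)]
        have hA := hP0 i (by omega)
        rw [cS0_top (by omega) (by omega : e ≤ i)] at hA
        omega
end
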